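/- Sufficiency direction of Theorem 1: Let π be a probability distribution on {1,…,K} with π(z) > 0 for all z; for each z let p_z be a probability distribution on {0,1} × {0,1} (interpreted as the conditional law of (X,Y) given Z = z); and let q be a probability distribution on {0,1} × {0,1} (interpreted as the law of (Y(x_0), Y(x_1))). Suppose for all z ∈ {1,…,K}, all i, y, ỹ ∈ {0,1}: (1) the q-marginal satisfies q(Y(x_i) = y) ≤ p_z(X = i, Y = y) + p_z(X = 1−i), and (2) q(y, ỹ) ≤ p_z(X = 0, Y = y) + p_z(X = 1, Y = ỹ). Then there exists a probability space carrying random variables Z : Ω → {1,…,K}, X(z) : Ω → {0,1} for each z, and Y(x_0), Y(x_1) : Ω → {0,1}, such that Z has law π, Z is independent of (Y(x_0), Y(x_1), X(z_1),…,X(z_K)), the observed variables X = X(Z) and Y = Y(X) satisfy P(X = x, Y = y | Z = z) = p_z(x, y) for all x, y, z, and (Y(x_0), Y(x_1)) has law q. -/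

import Mathlib

/-!
For each instrument value `z`, the hypotheses are exactly the feasibility conditions of a
transportation problem: find a joint law `r_z` of `(X(z), Y(x₀), Y(x₁))` whose potential-outcome
marginal is `q` and under which `(X(z), Y(X(z)))` has law `p_z`. Such a table has a single free
entry, and each lower bound on it lies below each upper bound by one of the inequalities (1), (2).
The tables `r_z` are glued by letting the `X(z)` be conditionally independent given
`(Y(x₀), Y(x₁))`, and `Z ∼ π` is drawn independently of everything on a product space.
-/

open MeasureTheory ProbabilityTheory

/-- A binary instrumental-variable model with instrument law `π` and observed conditional
laws `p z x y = P(X = x, Y = y | Z = z)`, satisfying assumption (i): joint independence of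
`Z` from `(Y(x₀), Y(x₁), X(z₁), …, X(z_K))`.  The observed treatment is `X = X(Z)` and the
observed outcome is `Y = Y(X)`. -/
structure IVModel (K : ℕ) (π : Fin K → ℝ) (p : Fin K → Fin 2 → Fin 2 → ℝ) where
  (Ω : Type)
  [m : MeasurableSpace Ω]
  (P : Measure Ω)
  prob : IsProbabilityMeasure P
  Z : Ω → Fin K
  Xz : Fin K → Ω → Fin 2
  Y0 : Ω → Fin 2
  Y1 : Ω → Fin 2
  hZ : Measurable Z
  hXz : ∀ z, Measurable (Xz z)
  hY0 : Measurable Y0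
  hY1 : Measurable Y1
  indep : IndepFun Z (fun ω => (Y0 ω, Y1 ω, fun z => Xz z ω)) P
  law_Z : ∀ z, (P (Z ⁻¹' {z})).toReal = π z
  law_cond : ∀ (z : Fin K) (x y : Fin 2),
    (P[|Z ⁻¹' {z}] {ω | Xz (Z ω) ω = x ∧
      (if Xz (Z ω) ω = 0 then Y0 ω else Y1 ω) = y}).toReal = p z x y

open Finset

def selectOutcome (x : Fin 2) (y : Fin 2 × Fin 2) : Fin 2 := if x = 0 then y.1 else y.2

/-- `r x (y₀, y₁)` is the probability of `X = x, Y(x₀) = y₀, Y(x₁) = y₁`. -/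
structure IsIVCoupling (p q : Fin 2 → Fin 2 → ℝ) (r : Fin 2 → Fin 2 × Fin 2 → ℝ) : Prop where
  nonneg : ∀ x y, 0 ≤ r x y
  sum_treatment : ∀ y, ∑ x, r x y = Function.uncurry q y
  sum_observed : ∀ x y, ∑ b, (if selectOutcome x b = y then r x b else 0) = p x y

theorem exists_isIVCoupling {p q : Fin 2 → Fin 2 → ℝ}
    (hp : ∀ x y, 0 ≤ p x y) (hpsum : ∑ x, ∑ y, p x y = 1)
    (hq : ∀ y0 y1, 0 ≤ q y0 y1) (hqsum : ∑ y0, ∑ y1, q y0 y1 = 1)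
    (hmarg : ∀ i y : Fin 2, (∑ t, if i = 0 then q y t else q t y) ≤ p i y + ∑ t, p (1 - i) t)
    (hjoint : ∀ y ytilde : Fin 2, q y ytilde ≤ p 0 y + p 1 ytilde) :
    ∃ r, IsIVCoupling p q r := by
  simp only [Fin.sum_univ_two] at hpsum hqsum
  simp only [Fin.forall_fin_two, Fin.sum_univ_two] at hp hq hmarg hjoint
  simp only [↓reduceIte, one_ne_zero, sub_zero, sub_self] at hmarg
  obtain ⟨⟨hp00, hp01⟩, hp10, hp11⟩ := hp
  obtain ⟨⟨hq00, hq01⟩, hq10, hq11⟩ := hq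
  obtain ⟨⟨hm00, hm01⟩, hm10, hm11⟩ := hmarg
  obtain ⟨⟨hj00, hj01⟩, hj10, hj11⟩ := hjoint
  -- `a y₀ y₁` is the mass of `X = 0`; its margins fix it up to the entry `t = a 0 0`, and each
  -- lower bound on `t` lies below each upper bound by one of the hypotheses.
  set c := q 0 0 + q 1 0 - p 1 0
  set t := max (max 0 (p 0 0 - q 0 1)) (max (c - q 1 0) (c - p 0 1))
  have ht₁ : 0 ≤ t := le_max_of_le_left (le_max_left _ _)
  have ht₂ : p 0 0 - q 0 1 ≤ t := le_max_of_le_left (le_max_right _ _)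
  have ht₃ : c - q 1 0 ≤ t := le_max_of_le_right (le_max_left _ _)
  have ht₄ : c - p 0 1 ≤ t := le_max_of_le_right (le_max_right _ _)
  obtain ⟨ht₅, ht₆, ht₇, ht₈⟩ : t ≤ q 0 0 ∧ t ≤ p 0 0 ∧ t ≤ c ∧ t ≤ c - p 0 1 + q 1 1 := by
    refine ⟨?_, ?_, ?_, ?_⟩ <;> refine max_le (max_le ?_ ?_) (max_le ?_ ?_) <;> linarith
  let a : Fin 2 → Fin 2 → ℝ := ![![t, p 0 0 - t], ![c - t, p 0 1 - c + t]]
  refine ⟨fun x b => if x = 0 then a b.1 b.2 else q b.1 b.2 - a b.1 b.2, ?_, ?_, ?_⟩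
  · simp only [Fin.forall_fin_two, Prod.forall, ↓reduceIte, one_ne_zero, sub_nonneg, a,
      Matrix.cons_val_zero, Matrix.cons_val_one, Matrix.cons_val_fin_one]
    refine ⟨⟨⟨?_, ?_⟩, ?_, ?_⟩, ⟨?_, ?_⟩, ?_, ?_⟩ <;> linarith
  · simp [a]
  · simp only [Fin.forall_fin_two, Fintype.sum_prod_type, Fin.sum_univ_two, selectOutcome,
      ↓reduceIte, one_ne_zero, zero_ne_one, add_zero, zero_add, a, Matrix.cons_val_zero,
      Matrix.cons_val_one, Matrix.cons_val_fin_one, add_sub_cancel, true_and]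
    refine ⟨?_, ?_, ?_⟩ <;> linarith

section Glue

variable {ι α β : Type*} [Fintype ι]

theorem Fintype.sum_pi_ite_apply_eq [DecidableEq ι] [Fintype α] [DecidableEq α] {R : Type*}
    [CommSemiring R] (g : ι → α → R) (hg : ∀ i, ∑ a, g i a = 1) (i : ι) (a : α) :
    ∑ f : ι → α, (if f i = a then ∏ j, g j (f j) else 0) = g i a := by
  let h := Function.update g i fun b => if b = a then g i b else 0
  have h_erase {j} (hj : j ∈ univ.erase i) : h j = g j :=
    Function.update_of_ne (ne_of_mem_erase hj) _ _
  have hprod (f : ι → α) : (if f i = a then ∏ j, g j (f j) else 0) = ∏ j, h j (f j) := by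
    rw [← mul_prod_erase univ (fun j => h j (f j)) (mem_univ i),
      Finset.prod_congr rfl fun j hj => congrFun (h_erase hj) (f j)]
    by_cases hf : f i = a
    · simp [h, hf, ← mul_prod_erase univ (fun j => g j (f j)) (mem_univ i)]
    · simp [h, hf]
  rw [Fintype.sum_congr _ _ hprod, ← Fintype.prod_sum,
    ← mul_prod_erase univ (fun j => ∑ b, h j b) (mem_univ i),
    Finset.prod_eq_one fun j hj => by rw [h_erase hj, hg]]
  simp [h]

theorem mul_div_eq_of_sum_eq [Fintype α] {r : α → ℝ} {c : ℝ} (hr : ∀ a, 0 ≤ r a)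
    (hrc : ∑ a, r a = c) (a : α) : c * (r a / c) = r a := by
  rcases eq_or_ne c 0 with hc | hc
  · rw [hc, zero_mul, eq_comm]
    exact (sum_eq_zero_iff_of_nonneg fun a _ => hr a).1 (hrc.trans hc) a (mem_univ a)
  · exact mul_div_cancel₀ _ hc

/-- The law of `(Y, (X i)ᵢ)` under which the `X i` are conditionally independent given `Y` and
each `(X i, Y)` has law `r i`. Where `q b = 0`, Lean's `x / 0 = 0` is harmless because the
factor `q b` vanishes. -/
noncomputable def glueCondIndep (q : β → ℝ) (r : ι → α → β → ℝ) (w : β × (ι → α)) : ℝ :=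
  q w.1 * ∏ i, r i (w.2 i) w.1 / q w.1

variable {q : β → ℝ} {r : ι → α → β → ℝ}

theorem glueCondIndep_nonneg (hq : ∀ b, 0 ≤ q b) (hr : ∀ i a b, 0 ≤ r i a b)
    (w : β × (ι → α)) : 0 ≤ glueCondIndep q r w :=
  mul_nonneg (hq _) (prod_nonneg fun _ _ => div_nonneg (hr _ _ _) (hq _))

theorem sum_glueCondIndep_mk [DecidableEq ι] [Fintype α] (hrq : ∀ i b, ∑ a, r i a b = q b)
    (b : β) : ∑ f, glueCondIndep q r (b, f) = q b := by
  rcases eq_or_ne (q b) 0 with hb | hb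
  · simp [glueCondIndep, hb]
  simp only [glueCondIndep]
  rw [← mul_sum, ← Fintype.prod_sum (fun i a => r i a b / q b)]
  simp [← sum_div, hrq, hb]

theorem sum_ite_glueCondIndep_mk [DecidableEq ι] [Fintype α] [DecidableEq α]
    (hr : ∀ i a b, 0 ≤ r i a b) (hrq : ∀ i b, ∑ a, r i a b = q b) (i : ι) (a : α) (b : β) :
    ∑ f : ι → α, (if f i = a then glueCondIndep q r (b, f) else 0) = r i a b := by
  calc ∑ f : ι → α, (if f i = a then glueCondIndep q r (b, f) else 0)
      = q b * ∑ f : ι → α, (if f i = a then ∏ j, r j (f j) b / q b else 0) := by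
        simp only [glueCondIndep, mul_sum, mul_ite, mul_zero]
    _ = q b * (r i a b / q b) := by
        rcases eq_or_ne (q b) 0 with hb | hb
        · simp [hb]
        rw [Fintype.sum_pi_ite_apply_eq (fun j a => r j a b / q b)
          (fun j => by rw [← sum_div, hrq, div_self hb])]
    _ = r i a b := mul_div_eq_of_sum_eq (hr i · b) (hrq i b) a

theorem sum_ite_fst_glueCondIndep [DecidableEq ι] [Fintype α] [Fintype β] [DecidableEq β]
    (hrq : ∀ i b, ∑ a, r i a b = q b) (b : β) :
    ∑ w : β × (ι → α), (if w.1 = b then glueCondIndep q r w else 0) = q b := by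
  rw [Fintype.sum_prod_type, sum_eq_single b (fun b' _ hb' => by simp [hb']) (by simp)]
  simpa using sum_glueCondIndep_mk hrq b

theorem sum_ite_glueCondIndep [DecidableEq ι] [Fintype α] [DecidableEq α] [Fintype β]
    (hr : ∀ i a b, 0 ≤ r i a b) (hrq : ∀ i b, ∑ a, r i a b = q b) (i : ι) (a : α)
    (T : β → Prop) [DecidablePred T] :
    ∑ w : β × (ι → α), (if w.2 i = a ∧ T w.1 then glueCondIndep q r w else 0) =
      ∑ b, if T b then r i a b else 0 := by
  rw [Fintype.sum_prod_type]
  refine sum_congr rfl fun b _ => ?_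
  by_cases hb : T b <;> simp [hb, sum_ite_glueCondIndep_mk hr hrq]

end Glue

section DiscreteMeasure

variable {α : Type*} [Fintype α] [MeasurableSpace α]

noncomputable def discreteMeasure (w : α → ℝ) : Measure α :=
  ∑ a, ENNReal.ofReal (w a) • Measure.dirac a

variable [MeasurableSingletonClass α] {w : α → ℝ}

theorem discreteMeasure_apply (hw : ∀ a, 0 ≤ w a) (s : Set α) [DecidablePred (· ∈ s)] :
    discreteMeasure w s = ENNReal.ofReal (∑ a, if a ∈ s then w a else 0) := by
  rw [discreteMeasure, Measure.finsetSum_apply,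
    ENNReal.ofReal_sum_of_nonneg fun a _ => ite_nonneg (hw a) le_rfl]
  refine sum_congr rfl fun a _ => ?_
  rw [Measure.smul_apply, Measure.dirac_apply' _ s.toFinite.measurableSet]
  by_cases h : a ∈ s <;> simp [h]

theorem discreteMeasure_apply_toReal (hw : ∀ a, 0 ≤ w a) (s : Set α) [DecidablePred (· ∈ s)] :
    (discreteMeasure w s).toReal = ∑ a, if a ∈ s then w a else 0 := by
  rw [discreteMeasure_apply hw, ENNReal.toReal_ofReal]
  exact sum_nonneg fun a _ => ite_nonneg (hw a) le_rfl

theorem isProbabilityMeasure_discreteMeasure (hw : ∀ a, 0 ≤ w a) (hw₁ : ∑ a, w a = 1) :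
    IsProbabilityMeasure (discreteMeasure w) :=
  ⟨by simp [discreteMeasure_apply hw, hw₁]⟩

end DiscreteMeasure

theorem cond_prod_fst_preimage_singleton {α β : Type*} [MeasurableSpace α]
    [MeasurableSingletonClass α] [MeasurableSpace β] (μ : Measure α) [IsFiniteMeasure μ]
    (ν : Measure β) [IsProbabilityMeasure ν] {a : α} (ha : μ {a} ≠ 0) (S : Set (α × β)) :
    (μ.prod ν)[|Prod.fst ⁻¹' {a}] S = ν (Prod.mk a ⁻¹' S) := by
  have hS : Prod.fst ⁻¹' {a} ∩ S = {a} ×ˢ (Prod.mk a ⁻¹' S) := by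
    ext ⟨x, y⟩
    simp only [Set.mem_inter_iff, Set.mem_preimage, Set.mem_singleton_iff, Set.mem_prod]
    constructor <;> rintro ⟨rfl, h⟩ <;> exact ⟨rfl, h⟩
  rw [cond_apply ((measurableSet_singleton a).preimage measurable_fst), hS, ← Set.prod_univ,
    Measure.prod_prod, Measure.prod_prod, measure_univ, mul_one,
    ENNReal.inv_mul_cancel_left ha (measure_ne_top μ _)]

section Model

variable {K : ℕ}

theorem exists_latent_law {p : Fin K → Fin 2 → Fin 2 → ℝ} {q : Fin 2 → Fin 2 → ℝ}
    (hq : ∀ y0 y1, 0 ≤ q y0 y1) (hqsum : ∑ y0, ∑ y1, q y0 y1 = 1)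
    {r : Fin K → Fin 2 → Fin 2 × Fin 2 → ℝ} (hr : ∀ z, IsIVCoupling (p z) q (r z)) :
    ∃ ν : Measure ((Fin 2 × Fin 2) × (Fin K → Fin 2)), IsProbabilityMeasure ν ∧
      (∀ z x y, (ν {w | w.2 z = x ∧ selectOutcome x w.1 = y}).toReal = p z x y) ∧
      ∀ y0 y1, (ν {w | w.1.1 = y0 ∧ w.1.2 = y1}).toReal = q y0 y1 := by
  have hr₀ : ∀ z x b, 0 ≤ r z x b := fun z => (hr z).nonneg
  have hrq : ∀ z b, ∑ x, r z x b = Function.uncurry q b := fun z => (hr z).sum_treatment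
  have hg₀ := glueCondIndep_nonneg (q := Function.uncurry q) (fun b => hq b.1 b.2) hr₀
  refine ⟨discreteMeasure (glueCondIndep (Function.uncurry q) r), ?_, fun z x y => ?_,
    fun y0 y1 => ?_⟩
  · refine isProbabilityMeasure_discreteMeasure hg₀ ?_
    rw [Fintype.sum_prod_type, Fintype.sum_congr _ _ (sum_glueCondIndep_mk hrq),
      Fintype.sum_prod_type, ← hqsum]
    rfl
  · rw [discreteMeasure_apply_toReal hg₀, ← (hr z).sum_observed x y,
      ← sum_ite_glueCondIndep hr₀ hrq z x (selectOutcome x · = y)]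
    rfl
  · rw [discreteMeasure_apply_toReal hg₀]
    exact (sum_congr rfl fun w _ => if_congr (Prod.ext_iff (y := (y0, y1))).symm rfl rfl).trans
      (sum_ite_fst_glueCondIndep hrq (y0, y1))

variable {π : Fin K → ℝ} {p : Fin K → Fin 2 → Fin 2 → ℝ}
  (μ : Measure (Fin K)) [IsProbabilityMeasure μ]
  (ν : Measure ((Fin 2 × Fin 2) × (Fin K → Fin 2))) [IsProbabilityMeasure ν]

noncomputable def IVModel.ofProd (hπ : ∀ z, 0 < π z) (hμ : ∀ z, (μ {z}).toReal = π z)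
    (hν : ∀ z x y, (ν {w | w.2 z = x ∧ selectOutcome x w.1 = y}).toReal = p z x y) :
    IVModel K π p where
  Ω := Fin K × ((Fin 2 × Fin 2) × (Fin K → Fin 2))
  P := μ.prod ν
  prob := inferInstance
  Z := Prod.fst
  Xz z ω := ω.2.2 z
  Y0 ω := ω.2.1.1
  Y1 ω := ω.2.1.2
  hZ := measurable_of_countable _
  hXz _ := measurable_of_countable _
  hY0 := measurable_of_countable _
  hY1 := measurable_of_countable _
  indep := indepFun_prod (X := id) (Y := fun w : (Fin 2 × Fin 2) × (Fin K → Fin 2) =>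
    (w.1.1, w.1.2, w.2)) measurable_id (measurable_of_countable _)
  law_Z z := by rw [← Set.prod_univ, Measure.prod_prod, measure_univ, mul_one, hμ]
  law_cond z x y := by
    have hμz : μ {z} ≠ 0 := fun h => (hπ z).ne' (by rw [← hμ, h, ENNReal.toReal_zero])
    rw [cond_prod_fst_preimage_singleton _ _ hμz, ← hν z x y]
    congr 2
    ext w
    exact and_congr_right fun h => by rw [← h]; rfl

theorem IVModel.ofProd_P_potential_outcomes (hπ : ∀ z, 0 < π z)
    (hμ : ∀ z, (μ {z}).toReal = π z)
    (hν : ∀ z x y, (ν {w | w.2 z = x ∧ selectOutcome x w.1 = y}).toReal = p z x y)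
    (y0 y1 : Fin 2) :
    let M := IVModel.ofProd μ ν hπ hμ hν
    M.P {ω | M.Y0 ω = y0 ∧ M.Y1 ω = y1} = ν {w | w.1.1 = y0 ∧ w.1.2 = y1} := by
  change (μ.prod ν) (Prod.snd ⁻¹' {w | w.1.1 = y0 ∧ w.1.2 = y1}) = _
  rw [← Set.univ_prod, Measure.prod_prod, measure_univ, one_mul]

end Model

theorem stmt5 (K : ℕ)
    (π : Fin K → ℝ) (hπpos : ∀ z, 0 < π z) (hπsum : ∑ z, π z = 1)
    (p : Fin K → Fin 2 → Fin 2 → ℝ)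
    (hpnonneg : ∀ z x y, 0 ≤ p z x y) (hpsum : ∀ z, ∑ x, ∑ y, p z x y = 1)
    (q : Fin 2 → Fin 2 → ℝ)
    (hqnonneg : ∀ y0 y1, 0 ≤ q y0 y1) (hqsum : ∑ y0, ∑ y1, q y0 y1 = 1)
    (hmarg : ∀ (z : Fin K) (i y : Fin 2),
      (∑ t, if i = 0 then q y t else q t y) ≤ p z i y + ∑ t, p z (1 - i) t)
    (hjoint : ∀ (z : Fin K) (y ytilde : Fin 2),
      q y ytilde ≤ p z 0 y + p z 1 ytilde) :
    ∃ M : IVModel K π p, ∀ y0 y1 : Fin 2,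
      (M.P {ω | M.Y0 ω = y0 ∧ M.Y1 ω = y1}).toReal = q y0 y1 := by
  choose r hr using fun z =>
    exists_isIVCoupling (hpnonneg z) (hpsum z) hqnonneg hqsum (hmarg z) (hjoint z)
  obtain ⟨ν, hν, hobserved, hpotential⟩ := exists_latent_law hqnonneg hqsum hr
  have hπ₀ : ∀ z, 0 ≤ π z := fun z => (hπpos z).le
  have := isProbabilityMeasure_discreteMeasure hπ₀ hπsum
  have hμ : ∀ z, (discreteMeasure π {z}).toReal = π z := fun z => by
    simp [discreteMeasure_apply_toReal hπ₀]
  refine ⟨IVModel.ofProd _ ν hπpos hμ hobserved, fun y0 y1 => ?_⟩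
  rw [IVModel.ofProd_P_potential_outcomes, hpotential]
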